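/- Consider a factor graph that is a tree with two binary variables X₁, X₂, a pairwise factor f(x₁,x₂) > 0 and unary factors g₁(x₁) > 0, g₂(x₂) > 0. Let messages be defined by one round of BP to convergence and beliefs b_a, b₁, b₂ computed accordingly. Then the Bethe free energy computed from these beliefs equals -ln Z where Z = ∑_{x₁,x₂} g₁(x₁) g₂(x₂) f(x₁,x₂). -/

import Mathlib

/-!
Taking logarithms of the Gibbs distribution `p = g₁ g₂ f / Z` gives
`ln p = ln g₁ + ln g₂ + ln f - ln Z`, so the entropy `-∑ p ln p` equals the average energy
`-∑ p (ln g₁ + ln g₂ + ln f)` plus `ln Z`. The unary parts of that average are averages against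
the marginals `b₁, b₂`, and the single-variable entropy corrections cancel because every variable
has degree two. Hence `U - H = -ln Z`.
-/

open Finset Real

theorem log_mul_mul_div {a b c z : ℝ} (ha : a ≠ 0) (hb : b ≠ 0) (hc : c ≠ 0) (hz : z ≠ 0) :
    log (a * b * c / z) = log a + log b + log c - log z := by
  rw [log_div (by positivity) hz, log_mul (by positivity) hc, log_mul ha hb]

section GibbsDistribution

variable {α β : Type*} [Fintype α] [Fintype β]
  {f : α → β → ℝ} {g1 : α → ℝ} {g2 : β → ℝ} {Z : ℝ} {p : α → β → ℝ}

theorem partition_function_pos [Nonempty α] [Nonempty β]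
    (hf : ∀ x y, 0 < f x y) (hg1 : ∀ x, 0 < g1 x) (hg2 : ∀ y, 0 < g2 y) :
    0 < ∑ x, ∑ y, g1 x * g2 y * f x y :=
  sum_pos (fun x _ => sum_pos (fun y _ => mul_pos (mul_pos (hg1 x) (hg2 y)) (hf x y))
    univ_nonempty) univ_nonempty

theorem sum_sum_gibbs_eq_one (hZ : Z = ∑ x, ∑ y, g1 x * g2 y * f x y) (hZ0 : Z ≠ 0)
    (hp : ∀ x y, p x y = g1 x * g2 y * f x y / Z) :
    ∑ x, ∑ y, p x y = 1 := by
  simp only [hp, ← sum_div, ← hZ, div_self hZ0]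

theorem sum_sum_gibbs_mul_log_self {b1 : α → ℝ} {b2 : β → ℝ}
    (hf : ∀ x y, f x y ≠ 0) (hg1 : ∀ x, g1 x ≠ 0) (hg2 : ∀ y, g2 y ≠ 0)
    (hZ : Z = ∑ x, ∑ y, g1 x * g2 y * f x y) (hZ0 : Z ≠ 0)
    (hp : ∀ x y, p x y = g1 x * g2 y * f x y / Z)
    (hb1 : ∀ x, b1 x = ∑ y, p x y) (hb2 : ∀ y, b2 y = ∑ x, p x y) :
    ∑ x, ∑ y, p x y * log (p x y)
      = ∑ x, ∑ y, p x y * log (f x y) + ∑ x, b1 x * log (g1 x) + ∑ y, b2 y * log (g2 y)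
        - log Z := by
  have h_left : ∑ x, ∑ y, p x y * log (g1 x) = ∑ x, b1 x * log (g1 x) := by
    simp only [hb1, sum_mul]
  have h_right : ∑ x, ∑ y, p x y * log (g2 y) = ∑ y, b2 y * log (g2 y) := by
    rw [sum_comm]
    simp only [hb2, sum_mul]
  have h_const : ∑ x, ∑ y, p x y * log Z = log Z := by
    simp only [← sum_mul, sum_sum_gibbs_eq_one hZ hZ0 hp, one_mul]
  calc ∑ x, ∑ y, p x y * log (p x y)
      = ∑ x, ∑ y, (p x y * log (f x y) + p x y * log (g1 x) + p x y * log (g2 y)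
          - p x y * log Z) := by
        refine sum_congr rfl fun x _ => sum_congr rfl fun y _ => ?_
        rw [hp x y, log_mul_mul_div (hg1 x) (hg2 y) (hf x y) hZ0]
        ring
    _ = _ := by
        simp only [sum_add_distrib, sum_sub_distrib, h_left, h_right, h_const]

end GibbsDistribution

theorem bethe_exact_two_variable_tree
    (f : Bool → Bool → ℝ) (g1 g2 : Bool → ℝ)
    (hf : ∀ x₁ x₂, 0 < f x₁ x₂) (hg1 : ∀ x₁, 0 < g1 x₁) (hg2 : ∀ x₂, 0 < g2 x₂)
    (Z : ℝ) (hZ : Z = ∑ x₁, ∑ x₂, g1 x₁ * g2 x₂ * f x₁ x₂)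
    (p : Bool → Bool → ℝ) (hp : ∀ x₁ x₂, p x₁ x₂ = g1 x₁ * g2 x₂ * f x₁ x₂ / Z)
    (b1 : Bool → ℝ) (hb1 : ∀ x₁, b1 x₁ = ∑ x₂, p x₁ x₂)
    (b2 : Bool → ℝ) (hb2 : ∀ x₂, b2 x₂ = ∑ x₁, p x₁ x₂) :
    -- Bethe free energy F = U - H computed from the beliefs
    -- U = -∑_a ∑_{x_a} b_a ln f_a  (factors: f, g1, g2)
    ((-∑ x₁, ∑ x₂, p x₁ x₂ * Real.log (f x₁ x₂))
        - (∑ x₁, b1 x₁ * Real.log (g1 x₁))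
        - (∑ x₂, b2 x₂ * Real.log (g2 x₂)))
    -- minus H = -∑_a ∑_{x_a} b_a ln b_a + ∑_i (d_i - 1) ∑_{x_i} b_i ln b_i,
    -- with d₁ = d₂ = 2
      - ((-∑ x₁, ∑ x₂, p x₁ x₂ * Real.log (p x₁ x₂))
          - (∑ x₁, b1 x₁ * Real.log (b1 x₁))
          - (∑ x₂, b2 x₂ * Real.log (b2 x₂))
          + ((2 : ℝ) - 1) * ∑ x₁, b1 x₁ * Real.log (b1 x₁)
          + ((2 : ℝ) - 1) * ∑ x₂, b2 x₂ * Real.log (b2 x₂))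
      = -Real.log Z := by
  have hZ0 : Z ≠ 0 := hZ ▸ (partition_function_pos hf hg1 hg2).ne'
  rw [sum_sum_gibbs_mul_log_self (fun x y => (hf x y).ne') (fun x => (hg1 x).ne')
    (fun y => (hg2 y).ne') hZ hZ0 hp hb1 hb2]
  ring
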